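/- arXiv:1403.1606 — 2 statements merged into one kernel-verified Lean document; each statement's English description precedes it below -/
import Mathlib

section
/- Let f : U → ℝⁿ be a minimal, 1-isotropic immersion with dim N₁(p) = 2 for every p ∈ U. Then at every point ⟪P₂ᶜ(φ″), P₂ᶜ(φ″)⟫ = ⟪φ″,φ″⟫, where P₂ᶜ is the ℂ-linear extension of the orthogonal projection P₂(p) onto (T(p) ⊕ N₁(p))^⊥. Consequently, the second ellipse of curvature E₂(p) is a circle at every point p ∈ U if and only if ⟪φ″,φ″⟫ ≡ 0 on U. -/
noncomputable section

open Complex Submodule Module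
open scoped RealInnerProductSpace

/-- ℝⁿ as Euclidean space. -/
abbrev Euc (n : ℕ) : Type := EuclideanSpace ℝ (Fin n)
/-- ℂⁿ. -/
abbrev EucC (n : ℕ) : Type := EuclideanSpace ℂ (Fin n)

variable {n : ℕ}

/-- Partial derivative in the `x` direction. -/
def pdx (f : ℝ × ℝ → Euc n) (p : ℝ × ℝ) : Euc n := fderiv ℝ f p (1, 0)

/-- Partial derivative in the `y` direction. -/
def pdy (f : ℝ × ℝ → Euc n) (p : ℝ × ℝ) : Euc n := fderiv ℝ f p (0, 1)

/-- Partial derivative in the `x` direction, for ℂⁿ-valued maps. -/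
def pdxC (φ : ℝ × ℝ → EucC n) (p : ℝ × ℝ) : EucC n := fderiv ℝ φ p (1, 0)

/-- Partial derivative in the `y` direction, for ℂⁿ-valued maps. -/
def pdyC (φ : ℝ × ℝ → EucC n) (p : ℝ × ℝ) : EucC n := fderiv ℝ φ p (0, 1)

/-- The inclusion ℝⁿ ⊆ ℂⁿ. -/
def cx (v : Euc n) : EucC n := WithLp.toLp 2 (fun k => (v k : ℂ))

/-- Componentwise real part. -/
def reV (w : EucC n) : Euc n := WithLp.toLp 2 (fun k => (w k).re)

/-- Componentwise imaginary part. -/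
def imV (w : EucC n) : Euc n := WithLp.toLp 2 (fun k => (w k).im)

/-- The ℂ-bilinear extension of the Euclidean inner product: ⟪u,w⟫ = ∑ uₖwₖ. -/
def bil (u w : EucC n) : ℂ := ∑ k, u k * w k

/-- The Wirtinger derivative ∂/∂z = (1/2)(∂ₓ - i ∂_y). -/
def pdz (φ : ℝ × ℝ → EucC n) : ℝ × ℝ → EucC n :=
  fun p => (1 / 2 : ℂ) • (pdxC φ p - Complex.I • pdyC φ p)

/-- The Wirtinger derivative ∂/∂z̄ = (1/2)(∂ₓ + i ∂_y). -/
def pdzbar (φ : ℝ × ℝ → EucC n) : ℝ × ℝ → EucC n :=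
  fun p => (1 / 2 : ℂ) • (pdxC φ p + Complex.I • pdyC φ p)

/-- φ = f_x - i f_y. -/
def phiOf (f : ℝ × ℝ → Euc n) : ℝ × ℝ → EucC n :=
  fun p => cx (pdx f p) - Complex.I • cx (pdy f p)

/-- Orthogonal projection onto a subspace, as a map `Euc n → Euc n`. -/
def projSub (K : Submodule ℝ (Euc n)) (v : Euc n) : Euc n :=
  (orthogonalProjection K v : Euc n)

/-- The tangent plane T(p) = span{f_x(p), f_y(p)}. -/
def TangentSp (f : ℝ × ℝ → Euc n) (p : ℝ × ℝ) : Submodule ℝ (Euc n) :=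
  span ℝ {pdx f p, pdy f p}

/-- Projection onto the normal space T(p)ᗮ. -/
def nProj (f : ℝ × ℝ → Euc n) (p : ℝ × ℝ) (v : Euc n) : Euc n :=
  v - projSub (TangentSp f p) v

/-- α₁₁ = P(f_xx). -/
def a11 (f : ℝ × ℝ → Euc n) (p : ℝ × ℝ) : Euc n := nProj f p (pdx (pdx f) p)

/-- α₁₂ = P(f_xy). -/
def a12 (f : ℝ × ℝ → Euc n) (p : ℝ × ℝ) : Euc n := nProj f p (pdx (pdy f) p)

/-- α₂₂ = P(f_yy). -/
def a22 (f : ℝ × ℝ → Euc n) (p : ℝ × ℝ) : Euc n := nProj f p (pdy (pdy f) p)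

/-- The first normal space N₁(p). -/
def N1 (f : ℝ × ℝ → Euc n) (p : ℝ × ℝ) : Submodule ℝ (Euc n) :=
  span ℝ {a11 f p, a12 f p, a22 f p}

/-- Z(p): tangential component of the position vector. -/
def Zt (f : ℝ × ℝ → Euc n) (p : ℝ × ℝ) : Euc n := projSub (TangentSp f p) (f p)

/-- The pedal surface g = f - Z (w.r.t. the origin). -/
def pedal (f : ℝ × ℝ → Euc n) : ℝ × ℝ → Euc n := fun p => f p - Zt f p

/-- δ(p): component of the position vector in N₁(p). -/
def deltaLow (f : ℝ × ℝ → Euc n) (p : ℝ × ℝ) : Euc n := projSub (N1 f p) (f p)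

/-- Projection onto (T(p) ⊕ N₁(p))ᗮ. -/
def nProj2 (f : ℝ × ℝ → Euc n) (p : ℝ × ℝ) (v : Euc n) : Euc n :=
  v - projSub (TangentSp f p ⊔ N1 f p) v

/-- The second normal space N₂(p). -/
def N2 (f : ℝ × ℝ → Euc n) (p : ℝ × ℝ) : Submodule ℝ (Euc n) :=
  span ℝ {nProj2 f p (pdx (pdx (pdx f)) p), nProj2 f p (pdx (pdx (pdy f)) p),
          nProj2 f p (pdx (pdy (pdy f)) p), nProj2 f p (pdy (pdy (pdy f)) p)}

/-- Projection onto (T(p) ⊕ N₁(p) ⊕ N₂(p))ᗮ. -/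
def nProj3 (f : ℝ × ℝ → Euc n) (p : ℝ × ℝ) (v : Euc n) : Euc n :=
  v - projSub (TangentSp f p ⊔ N1 f p ⊔ N2 f p) v

/-- The third normal space N₃(p). -/
def N3 (f : ℝ × ℝ → Euc n) (p : ℝ × ℝ) : Submodule ℝ (Euc n) :=
  span ℝ {nProj3 f p (pdx (pdx (pdx (pdx f))) p), nProj3 f p (pdx (pdx (pdx (pdy f))) p),
          nProj3 f p (pdx (pdx (pdy (pdy f))) p), nProj3 f p (pdx (pdy (pdy (pdy f))) p),
          nProj3 f p (pdy (pdy (pdy (pdy f))) p)}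

/-- Smooth immersion on `U`. -/
def IsImmersionOn (f : ℝ × ℝ → Euc n) (U : Set (ℝ × ℝ)) : Prop :=
  ContDiffOn ℝ (⊤ : ℕ∞) f U ∧ ∀ p ∈ U, LinearIndependent ℝ ![pdx f p, pdy f p]

/-- Conformal immersion on `U`. -/
def IsConformalOn (f : ℝ × ℝ → Euc n) (U : Set (ℝ × ℝ)) : Prop :=
  IsImmersionOn f U ∧ ∀ p ∈ U, (inner ℝ (pdx f p) (pdy f p) : ℝ) = 0 ∧ ‖pdx f p‖ = ‖pdy f p‖

/-- Minimal (conformal harmonic) immersion on `U`. -/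
def IsMinimalOn (f : ℝ × ℝ → Euc n) (U : Set (ℝ × ℝ)) : Prop :=
  IsConformalOn f U ∧ ∀ p ∈ U, pdx (pdx f) p + pdy (pdy f) p = 0

/-- 1-isotropic: ⟪φ′,φ′⟫ ≡ 0. -/
def IsIsotropic1On (f : ℝ × ℝ → Euc n) (U : Set (ℝ × ℝ)) : Prop :=
  ∀ p ∈ U, bil (pdz (phiOf f) p) (pdz (phiOf f) p) = 0

/-- 2-isotropic: moreover ⟪φ″,φ″⟫ ≡ 0. -/
def IsIsotropic2On (f : ℝ × ℝ → Euc n) (U : Set (ℝ × ℝ)) : Prop :=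
  IsIsotropic1On f U ∧ ∀ p ∈ U, bil (pdz (pdz (phiOf f)) p) (pdz (pdz (phiOf f)) p) = 0

/-- 3-isotropic: moreover ⟪φ‴,φ‴⟫ ≡ 0. -/
def IsIsotropic3On (f : ℝ × ℝ → Euc n) (U : Set (ℝ × ℝ)) : Prop :=
  IsIsotropic2On f U ∧
    ∀ p ∈ U, bil (pdz (pdz (pdz (phiOf f))) p) (pdz (pdz (pdz (phiOf f))) p) = 0

/-- Regular (nicely curved): dim N₁ = dim N₂ = 2 everywhere. -/
def IsRegularOn (f : ℝ × ℝ → Euc n) (U : Set (ℝ × ℝ)) : Prop :=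
  ∀ p ∈ U, finrank ℝ (N1 f p) = 2 ∧ finrank ℝ (N2 f p) = 2

/-- Substantial: the image is contained in no proper affine subspace. -/
def IsSubstantialOn (f : ℝ × ℝ → Euc n) (U : Set (ℝ × ℝ)) : Prop :=
  ∀ A : AffineSubspace ℝ (Euc n), (∀ p ∈ U, f p ∈ A) → A = ⊤

/-- ξ₁ = (α₁₁ - α₂₂)/(2‖f_x‖²). -/
def xi1 (f : ℝ × ℝ → Euc n) (p : ℝ × ℝ) : Euc n :=
  (2 * ‖pdx f p‖ ^ 2)⁻¹ • (a11 f p - a22 f p)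

/-- ξ₂ = α₁₂/‖f_x‖². -/
def xi2 (f : ℝ × ℝ → Euc n) (p : ℝ × ℝ) : Euc n :=
  (‖pdx f p‖ ^ 2)⁻¹ • a12 f p

/-- Superconformal: the curvature ellipse is a nondegenerate circle at every point. -/
def IsSuperconformalOn (f : ℝ × ℝ → Euc n) (U : Set (ℝ × ℝ)) : Prop :=
  ∀ p ∈ U, (inner ℝ (xi1 f p) (xi2 f p) : ℝ) = 0 ∧ ‖xi1 f p‖ = ‖xi2 f p‖ ∧ xi1 f p ≠ 0

/-- The Gaussian curvature K = (⟨α₁₁,α₂₂⟩ - ‖α₁₂‖²)/ρ⁴. -/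
def Kcurv (f : ℝ × ℝ → Euc n) (p : ℝ × ℝ) : ℝ :=
  ((inner ℝ (a11 f p) (a22 f p) : ℝ) - ‖a12 f p‖ ^ 2) / ‖pdx f p‖ ^ 4

/-- θ̂ = ‖Z‖² + ‖δ‖². -/
def thetaHat (f : ℝ × ℝ → Euc n) (p : ℝ × ℝ) : ℝ :=
  ‖Zt f p‖ ^ 2 + ‖deltaLow f p‖ ^ 2

/-- JZ = (⟨Z,f_x⟩f_y - ⟨Z,f_y⟩f_x)/ρ². -/
def Jz (f : ℝ × ℝ → Euc n) (p : ℝ × ℝ) : Euc n :=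
  (‖pdx f p‖ ^ 2)⁻¹ •
    ((inner ℝ (Zt f p) (pdx f p) : ℝ) • pdy f p - (inner ℝ (Zt f p) (pdy f p) : ℝ) • pdx f p)

/-- J⊥δ = (⟨δ,α₁₁⟩α₁₂ - ⟨δ,α₁₂⟩α₁₁)/‖α₁₁‖². -/
def JperpDelta (f : ℝ × ℝ → Euc n) (p : ℝ × ℝ) : Euc n :=
  (‖a11 f p‖ ^ 2)⁻¹ •
    ((inner ℝ (deltaLow f p) (a11 f p) : ℝ) • a12 f p - (inner ℝ (deltaLow f p) (a12 f p) : ℝ) • a11 f p)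

/-- ℂ-linear extension of the projection onto the normal space of `f`. -/
def nProjC (f : ℝ × ℝ → Euc n) (p : ℝ × ℝ) (w : EucC n) : EucC n :=
  cx (nProj f p (reV w)) + Complex.I • cx (nProj f p (imV w))

/-- ℂ-linear extension of the projection onto (T ⊕ N₁)ᗮ. -/
def nProj2C (f : ℝ × ℝ → Euc n) (p : ℝ × ℝ) (w : EucC n) : EucC n :=
  cx (nProj2 f p (reV w)) + Complex.I • cx (nProj2 f p (imV w))

/-- g_zz = (1/4)(g_xx - g_yy - 2i g_xy). -/
def gzz (g : ℝ × ℝ → Euc n) (p : ℝ × ℝ) : EucC n :=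
  (1 / 4 : ℂ) •
    (cx (pdx (pdx g) p) - cx (pdy (pdy g) p) - (2 * Complex.I) • cx (pdx (pdy g) p))

/-- The inversion ℐ_{p₀,R}. -/
def inversionMap (p₀ : Euc n) (R : ℝ) (q : Euc n) : Euc n :=
  p₀ + (R ^ 2 / ‖q - p₀‖ ^ 2) • (q - p₀)

/-- The mean curvature vector H = (P(g_xx) + P(g_yy))/(2‖g_x‖²). -/
def meanCurv (g : ℝ × ℝ → Euc n) (p : ℝ × ℝ) : Euc n :=
  (2 * ‖pdx g p‖ ^ 2)⁻¹ • (nProj g p (pdx (pdx g) p) + nProj g p (pdy (pdy g) p))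

/-- The pointwise normal component of a fixed vector `v` along `f`. -/
def normalComp (f : ℝ × ℝ → Euc n) (v : Euc n) : ℝ × ℝ → Euc n :=
  fun p => v - projSub (TangentSp f p) v

/-- Third directional derivative ((cos θ)∂ₓ + (sin θ)∂_y)³ f. -/
def dir3 (f : ℝ × ℝ → Euc n) (θ : ℝ) (p : ℝ × ℝ) : Euc n :=
  (Real.cos θ ^ 3) • pdx (pdx (pdx f)) p
    + (3 * Real.cos θ ^ 2 * Real.sin θ) • pdx (pdx (pdy f)) p
    + (3 * Real.cos θ * Real.sin θ ^ 2) • pdx (pdy (pdy f)) p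
    + (Real.sin θ ^ 3) • pdy (pdy (pdy f)) p
section Helpers

variable {n : ℕ}

/-- `cx` as a linear map. -/
def cxLM : Euc n →ₗ[ℝ] EucC n where
  toFun := cx
  map_add' u v := by ext k; simp [cx]
  map_smul' c v := by ext k; simp [cx]

/-- `cx` as a continuous linear map. -/
def cxL : Euc n →L[ℝ] EucC n := LinearMap.toContinuousLinearMap cxLM

@[simp] lemma cxL_apply (v : Euc n) : cxL v = cx v := rfl

lemma bil_formula (a b c d : Euc n) :
    bil (cx a - Complex.I • cx b) (cx c - Complex.I • cx d)
      = (((inner ℝ a c : ℝ) - (inner ℝ b d : ℝ)) : ℂ)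
        - Complex.I * (((inner ℝ a d : ℝ) + (inner ℝ b c : ℝ)) : ℂ) := by
  unfold bil
  have hk : ∀ k : Fin n, (cx a - Complex.I • cx b) k * (cx c - Complex.I • cx d) k
      = ((a k * c k - b k * d k : ℝ) : ℂ)
        - Complex.I * ((a k * d k + b k * c k : ℝ) : ℂ) := by
    intro k
    have h1 : (cx a - Complex.I • cx b) k = (a k : ℂ) - Complex.I * (b k : ℂ) := rfl
    have h2 : (cx c - Complex.I • cx d) k = (c k : ℂ) - Complex.I * (d k : ℂ) := rfl
    rw [h1, h2]
    push_cast
    linear_combination ((b k : ℂ) * (d k : ℂ)) * Complex.I_sq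
  rw [Finset.sum_congr rfl fun k _ => hk k]
  simp only [PiLp.inner_apply, RCLike.inner_apply, conj_trivial]
  push_cast
  simp only [Finset.sum_sub_distrib, Finset.sum_add_distrib, ← Finset.mul_sum]
  simp only [mul_comm]

end Helpers

section DerivHelpers

variable {n : ℕ} {F : Type*} [NormedAddCommGroup F] [NormedSpace ℝ F]
variable {U : Set (ℝ × ℝ)}

lemma diffAt_of_cd {g : ℝ × ℝ → F} (hg : ContDiffOn ℝ (⊤ : ℕ∞) g U) (hU : IsOpen U)
    {p : ℝ × ℝ} (hp : p ∈ U) : DifferentiableAt ℝ g p :=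
  (hg.differentiableOn (by simp)).differentiableAt (hU.mem_nhds hp)

lemma contDiffOn_pdx {g : ℝ × ℝ → Euc n} (hg : ContDiffOn ℝ (⊤ : ℕ∞) g U) (hU : IsOpen U) :
    ContDiffOn ℝ (⊤ : ℕ∞) (pdx g) U :=
  (hg.fderiv_of_isOpen hU (by simp)).clm_apply contDiffOn_const

lemma contDiffOn_pdy {g : ℝ × ℝ → Euc n} (hg : ContDiffOn ℝ (⊤ : ℕ∞) g U) (hU : IsOpen U) :
    ContDiffOn ℝ (⊤ : ℕ∞) (pdy g) U :=
  (hg.fderiv_of_isOpen hU (by simp)).clm_apply contDiffOn_const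

lemma schwarz {g : ℝ × ℝ → F} (hg : ContDiffOn ℝ (⊤ : ℕ∞) g U) (hU : IsOpen U)
    {p : ℝ × ℝ} (hp : p ∈ U) (v w : ℝ × ℝ) :
    fderiv ℝ (fun q => fderiv ℝ g q v) p w = fderiv ℝ (fun q => fderiv ℝ g q w) p v := by
  have hd : ∀ᶠ q in nhds p, HasFDerivAt g (fderiv ℝ g q) q := by
    filter_upwards [hU.mem_nhds hp] with q hq using (diffAt_of_cd hg hU hq).hasFDerivAt
  have h2 : DifferentiableAt ℝ (fun q => fderiv ℝ g q) p :=
    diffAt_of_cd (hg.fderiv_of_isOpen hU (by simp)) hU hp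
  have hsym := second_derivative_symmetric_of_eventually hd h2.hasFDerivAt w v
  have e1 := (h2.hasFDerivAt.clm_apply (hasFDerivAt_const v p)).fderiv
  have e2 := (h2.hasFDerivAt.clm_apply (hasFDerivAt_const w p)).fderiv
  rw [e1, e2]
  simp only [ContinuousLinearMap.add_apply, ContinuousLinearMap.comp_apply,
    ContinuousLinearMap.flip_apply, ContinuousLinearMap.zero_apply, map_zero, zero_add]
  exact hsym

lemma pdx_pdy_symm {g : ℝ × ℝ → Euc n} (hg : ContDiffOn ℝ (⊤ : ℕ∞) g U) (hU : IsOpen U)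
    {p : ℝ × ℝ} (hp : p ∈ U) :
    pdx (pdy g) p = pdy (pdx g) p :=
  schwarz hg hU hp (0, 1) (1, 0)

end DerivHelpers

section PhiHelpers

variable {n : ℕ} {U : Set (ℝ × ℝ)}

lemma cx_neg (v : Euc n) : cx (-v) = -cx v := by
  ext k; simp [cx]

lemma fderiv_cx_sub_I_cx {g h : ℝ × ℝ → Euc n} {p : ℝ × ℝ}
    (hg : DifferentiableAt ℝ g p) (hh : DifferentiableAt ℝ h p) (w : ℝ × ℝ) :
    fderiv ℝ (fun q => cx (g q) - Complex.I • cx (h q)) p w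
      = cx (fderiv ℝ g p w) - Complex.I • cx (fderiv ℝ h p w) := by
  have h1 : HasFDerivAt (fun q => cx (g q)) ((cxL (n := n)).comp (fderiv ℝ g p)) p :=
    (cxL (n := n)).hasFDerivAt.comp p hg.hasFDerivAt
  have h2 : HasFDerivAt (fun q => Complex.I • cx (h q))
      (Complex.I • ((cxL (n := n)).comp (fderiv ℝ h p))) p :=
    ((cxL (n := n)).hasFDerivAt.comp p hh.hasFDerivAt).const_smul Complex.I
  rw [(h1.fun_sub h2).fderiv]
  simp

lemma half_combo (A B : EucC n) :
    (1 / 2 : ℂ) • ((A - Complex.I • B) - Complex.I • (B + Complex.I • A)) = A - Complex.I • B := by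
  have h : Complex.I • Complex.I • A = -A := by
    rw [smul_smul, Complex.I_mul_I, neg_one_smul]
  rw [smul_add, h]
  match_scalars <;> ring

/-- φ′ = f_xx - i f_xy on U. -/
lemma pdz_phi {f : ℝ × ℝ → Euc n} (hf : ContDiffOn ℝ (⊤ : ℕ∞) f U) (hU : IsOpen U)
    (harm : ∀ q ∈ U, pdx (pdx f) q + pdy (pdy f) q = 0)
    {p : ℝ × ℝ} (hp : p ∈ U) :
    pdz (phiOf f) p = cx (pdx (pdx f) p) - Complex.I • cx (pdx (pdy f) p) := by
  have hdx : DifferentiableAt ℝ (pdx f) p := diffAt_of_cd (contDiffOn_pdx hf hU) hU hp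
  have hdy : DifferentiableAt ℝ (pdy f) p := diffAt_of_cd (contDiffOn_pdy hf hU) hU hp
  have hx : pdxC (phiOf f) p = cx (pdx (pdx f) p) - Complex.I • cx (pdx (pdy f) p) :=
    fderiv_cx_sub_I_cx hdx hdy (1, 0)
  have hy : pdyC (phiOf f) p
      = cx (pdx (pdy f) p) + Complex.I • cx (pdx (pdx f) p) := by
    have h0 : pdyC (phiOf f) p
        = cx (fderiv ℝ (pdx f) p (0, 1)) - Complex.I • cx (fderiv ℝ (pdy f) p (0, 1)) :=
      fderiv_cx_sub_I_cx hdx hdy (0, 1)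
    have e1 : fderiv ℝ (pdx f) p (0, 1) = pdx (pdy f) p :=
      (pdx_pdy_symm hf hU hp).symm
    have e2 : fderiv ℝ (pdy f) p (0, 1) = -pdx (pdx f) p :=
      (neg_eq_of_add_eq_zero_right (harm p hp)).symm
    rw [h0, e1, e2, cx_neg, smul_neg, sub_neg_eq_add]
  show (1 / 2 : ℂ) • (pdxC (phiOf f) p - Complex.I • pdyC (phiOf f) p) = _
  rw [hx, hy]
  exact half_combo _ _

end PhiHelpers

section ThirdDeriv

variable {n : ℕ} {U : Set (ℝ × ℝ)}

lemma pd_congr {g h : ℝ × ℝ → Euc n} (hU : IsOpen U) (heq : ∀ q ∈ U, g q = h q)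
    {p : ℝ × ℝ} (hp : p ∈ U) (w : ℝ × ℝ) : fderiv ℝ g p w = fderiv ℝ h p w := by
  have h1 : g =ᶠ[nhds p] h := Filter.eventuallyEq_of_mem (hU.mem_nhds hp) heq
  rw [h1.fderiv_eq]

variable {f : ℝ × ℝ → Euc n} {p : ℝ × ℝ}

lemma harm0 (harm : ∀ q ∈ U, pdx (pdx f) q + pdy (pdy f) q = 0) : ∀ q ∈ U, pdy (pdy f) q = -pdx (pdx f) q := fun q hq =>
  (neg_eq_of_add_eq_zero_right (harm q hq)).symm

lemma e_yxx (hf : ContDiffOn ℝ (⊤ : ℕ∞) f U) (hU : IsOpen U)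
    (harm : ∀ q ∈ U, pdx (pdx f) q + pdy (pdy f) q = 0) (hp : p ∈ U) : pdy (pdx (pdx f)) p = pdx (pdx (pdy f)) p := by
  have h1 : pdy (pdx (pdx f)) p = pdx (pdy (pdx f)) p :=
    schwarz (contDiffOn_pdx hf hU) hU hp (1, 0) (0, 1)
  have h2 : pdx (pdy (pdx f)) p = pdx (pdx (pdy f)) p :=
    pd_congr hU (fun q hq => (pdx_pdy_symm hf hU hq).symm) hp (1, 0)
  rw [h1, h2]

lemma e_xyy (hf : ContDiffOn ℝ (⊤ : ℕ∞) f U) (hU : IsOpen U)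
    (harm : ∀ q ∈ U, pdx (pdx f) q + pdy (pdy f) q = 0) (hp : p ∈ U) : pdx (pdy (pdy f)) p = -pdx (pdx (pdx f)) p := by
  have h1 : pdx (pdy (pdy f)) p = pdx (fun q => -pdx (pdx f) q) p :=
    pd_congr hU (harm0 harm) hp (1, 0)
  rw [h1]
  show fderiv ℝ (fun q => -pdx (pdx f) q) p (1, 0) = _
  rw [fderiv_fun_neg]
  rfl

lemma e_yxy (hf : ContDiffOn ℝ (⊤ : ℕ∞) f U) (hU : IsOpen U)
    (harm : ∀ q ∈ U, pdx (pdx f) q + pdy (pdy f) q = 0) (hp : p ∈ U) : pdy (pdx (pdy f)) p = -pdx (pdx (pdx f)) p := by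
  have h1 : pdy (pdx (pdy f)) p = pdx (pdy (pdy f)) p :=
    schwarz (contDiffOn_pdy hf hU) hU hp (1, 0) (0, 1)
  rw [h1, e_xyy hf hU harm hp]

lemma e_yyy (hf : ContDiffOn ℝ (⊤ : ℕ∞) f U) (hU : IsOpen U)
    (harm : ∀ q ∈ U, pdx (pdx f) q + pdy (pdy f) q = 0) (hp : p ∈ U) : pdy (pdy (pdy f)) p = -pdx (pdx (pdy f)) p := by
  have h1 : pdy (pdy (pdy f)) p = pdy (fun q => -pdx (pdx f) q) p :=
    pd_congr hU (harm0 harm) hp (0, 1)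
  rw [h1]
  have h2 : pdy (fun q => -pdx (pdx f) q) p = -pdy (pdx (pdx f)) p := by
    show fderiv ℝ (fun q => -pdx (pdx f) q) p (0, 1) = _
    rw [fderiv_fun_neg]; rfl
  rw [h2, e_yxx hf hU harm hp]

/-- φ″ = f_xxx - i f_xxy on U. -/
lemma pdz2_phi (hf : ContDiffOn ℝ (⊤ : ℕ∞) f U) (hU : IsOpen U)
    (harm : ∀ q ∈ U, pdx (pdx f) q + pdy (pdy f) q = 0) (hp : p ∈ U) : pdz (pdz (phiOf f)) p
    = cx (pdx (pdx (pdx f)) p) - Complex.I • cx (pdx (pdx (pdy f)) p) := by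
  have hdxx : DifferentiableAt ℝ (pdx (pdx f)) p :=
    diffAt_of_cd (contDiffOn_pdx (contDiffOn_pdx hf hU) hU) hU hp
  have hdxy : DifferentiableAt ℝ (pdx (pdy f)) p :=
    diffAt_of_cd (contDiffOn_pdx (contDiffOn_pdy hf hU) hU) hU hp
  have heq : ∀ q ∈ U, pdz (phiOf f) q
      = (fun q => cx (pdx (pdx f) q) - Complex.I • cx (pdx (pdy f) q)) q := fun q hq =>
    pdz_phi hf hU harm hq
  have hx : pdxC (pdz (phiOf f)) p
      = cx (pdx (pdx (pdx f)) p) - Complex.I • cx (pdx (pdx (pdy f)) p) := by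
    have h1 : pdxC (pdz (phiOf f)) p
        = fderiv ℝ (fun q => cx (pdx (pdx f) q) - Complex.I • cx (pdx (pdy f) q)) p (1, 0) := by
      show fderiv ℝ (pdz (phiOf f)) p (1, 0) = _
      have h2 : pdz (phiOf f) =ᶠ[nhds p] _ := Filter.eventuallyEq_of_mem (hU.mem_nhds hp) heq
      rw [h2.fderiv_eq]
    rw [h1, fderiv_cx_sub_I_cx hdxx hdxy (1, 0)]
    rfl
  have hy : pdyC (pdz (phiOf f)) p
      = cx (pdx (pdx (pdy f)) p) + Complex.I • cx (pdx (pdx (pdx f)) p) := by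
    have h1 : pdyC (pdz (phiOf f)) p
        = fderiv ℝ (fun q => cx (pdx (pdx f) q) - Complex.I • cx (pdx (pdy f) q)) p (0, 1) := by
      show fderiv ℝ (pdz (phiOf f)) p (0, 1) = _
      have h2 : pdz (phiOf f) =ᶠ[nhds p] _ := Filter.eventuallyEq_of_mem (hU.mem_nhds hp) heq
      rw [h2.fderiv_eq]
    rw [h1, fderiv_cx_sub_I_cx hdxx hdxy (0, 1)]
    have e1 : fderiv ℝ (pdx (pdx f)) p (0, 1) = pdx (pdx (pdy f)) p := e_yxx hf hU harm hp
    have e2 : fderiv ℝ (pdx (pdy f)) p (0, 1) = -pdx (pdx (pdx f)) p := e_yxy hf hU harm hp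
    rw [e1, e2, cx_neg, smul_neg, sub_neg_eq_add]
  show (1 / 2 : ℂ) • (pdxC (pdz (phiOf f)) p - Complex.I • pdyC (pdz (phiOf f)) p) = _
  rw [hx, hy]
  exact half_combo _ _

end ThirdDeriv

section InnerDeriv

variable {n : ℕ} {U : Set (ℝ × ℝ)}

lemma diff_inner_eq {g h k l : ℝ × ℝ → Euc n} (hU : IsOpen U)
    (heq : ∀ q ∈ U, (inner ℝ (g q) (h q) : ℝ) = inner ℝ (k q) (l q)) {p : ℝ × ℝ} (hp : p ∈ U)
    (hg : DifferentiableAt ℝ g p) (hh : DifferentiableAt ℝ h p)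
    (hk : DifferentiableAt ℝ k p) (hl : DifferentiableAt ℝ l p) (w : ℝ × ℝ) :
    (inner ℝ (g p) (fderiv ℝ h p w) : ℝ) + inner ℝ (fderiv ℝ g p w) (h p)
      = (inner ℝ (k p) (fderiv ℝ l p w) : ℝ) + inner ℝ (fderiv ℝ k p w) (l p) := by
  have h1 : (fun q => (inner ℝ (g q) (h q) : ℝ)) =ᶠ[nhds p] fun q => (inner ℝ (k q) (l q) : ℝ) :=
    Filter.eventuallyEq_of_mem (hU.mem_nhds hp) heq
  have e1 := fderiv_inner_apply (𝕜 := ℝ) hg hh w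
  have e2 := fderiv_inner_apply (𝕜 := ℝ) hk hl w
  rw [← e1, ← e2, h1.fderiv_eq]

lemma diff_inner_zero {g h : ℝ × ℝ → Euc n} (hU : IsOpen U)
    (heq : ∀ q ∈ U, (inner ℝ (g q) (h q) : ℝ) = 0) {p : ℝ × ℝ} (hp : p ∈ U)
    (hg : DifferentiableAt ℝ g p) (hh : DifferentiableAt ℝ h p) (w : ℝ × ℝ) :
    (inner ℝ (g p) (fderiv ℝ h p w) : ℝ) + inner ℝ (fderiv ℝ g p w) (h p) = 0 := by
  have := diff_inner_eq (k := fun _ => (0 : Euc n)) (l := fun _ => (0 : Euc n)) hU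
    (by simpa using heq) hp hg hh (differentiableAt_const _) (differentiableAt_const _) w
  simpa using this

end InnerDeriv

section Relations

variable {n : ℕ} {U : Set (ℝ × ℝ)} {f : ℝ × ℝ → Euc n}

lemma rel_a (hf : ContDiffOn ℝ (⊤ : ℕ∞) f U) (hU : IsOpen U)
    (hconf1 : ∀ q ∈ U, ‖pdx f q‖ = ‖pdy f q‖) :
    ∀ p ∈ U, (inner ℝ (pdx (pdx f) p) (pdx f p) : ℝ) = inner ℝ (pdx (pdy f) p) (pdy f p) := by
  intro p hp
  have hdx : DifferentiableAt ℝ (pdx f) p := diffAt_of_cd (contDiffOn_pdx hf hU) hU hp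
  have hdy : DifferentiableAt ℝ (pdy f) p := diffAt_of_cd (contDiffOn_pdy hf hU) hU hp
  have rel := diff_inner_eq hU (g := pdx f) (h := pdx f) (k := pdy f) (l := pdy f)
    (fun q hq => by
      rw [real_inner_self_eq_norm_sq, real_inner_self_eq_norm_sq, hconf1 q hq])
    hp hdx hdx hdy hdy (1, 0)
  have rel' : (inner ℝ (pdx f p) (pdx (pdx f) p) : ℝ) + inner ℝ (pdx (pdx f) p) (pdx f p)
      = (inner ℝ (pdy f p) (pdx (pdy f) p) : ℝ) + inner ℝ (pdx (pdy f) p) (pdy f p) := rel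
  have c1 := real_inner_comm (pdx f p) (pdx (pdx f) p)
  have c2 := real_inner_comm (pdy f p) (pdx (pdy f) p)
  linarith

lemma rel_b (hf : ContDiffOn ℝ (⊤ : ℕ∞) f U) (hU : IsOpen U)
    (hconf0 : ∀ q ∈ U, (inner ℝ (pdx f q) (pdy f q) : ℝ) = 0) :
    ∀ p ∈ U, (inner ℝ (pdx (pdx f) p) (pdy f p) : ℝ) = -inner ℝ (pdx (pdy f) p) (pdx f p) := by
  intro p hp
  have hdx : DifferentiableAt ℝ (pdx f) p := diffAt_of_cd (contDiffOn_pdx hf hU) hU hp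
  have hdy : DifferentiableAt ℝ (pdy f) p := diffAt_of_cd (contDiffOn_pdy hf hU) hU hp
  have rel := diff_inner_zero hU hconf0 hp hdx hdy (1, 0)
  have rel' : (inner ℝ (pdx f p) (pdx (pdy f) p) : ℝ) + inner ℝ (pdx (pdx f) p) (pdy f p) = 0 := rel
  have c1 := real_inner_comm (pdx f p) (pdx (pdy f) p)
  linarith

lemma rel_B (hf : ContDiffOn ℝ (⊤ : ℕ∞) f U) (hU : IsOpen U)
    (harm : ∀ q ∈ U, pdx (pdx f) q + pdy (pdy f) q = 0)
    (hiso : IsIsotropic1On f U) :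
    ∀ p ∈ U, (inner ℝ (pdx (pdx f) p) (pdx (pdx f) p) : ℝ)
        = inner ℝ (pdx (pdy f) p) (pdx (pdy f) p)
      ∧ (inner ℝ (pdx (pdx f) p) (pdx (pdy f) p) : ℝ) = 0 := by
  intro p hp
  have h := hiso p hp
  rw [pdz_phi hf hU harm hp, bil_formula] at h
  rw [Complex.ext_iff] at h
  obtain ⟨hre, him⟩ := h
  simp only [Complex.sub_re, Complex.ofReal_re, Complex.mul_re, Complex.I_re, Complex.I_im,
    Complex.ofReal_im, Complex.sub_im, Complex.mul_im, Complex.add_re, Complex.add_im, Complex.zero_re, Complex.zero_im] at hre him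
  have c := real_inner_comm (pdx (pdx f) p) (pdx (pdy f) p)
  constructor <;> linarith

end Relations

section Relations2

variable {n : ℕ} {U : Set (ℝ × ℝ)} {f : ℝ × ℝ → Euc n}

lemma rel_c1 (hf : ContDiffOn ℝ (⊤ : ℕ∞) f U) (hU : IsOpen U)
    (hconf1 : ∀ q ∈ U, ‖pdx f q‖ = ‖pdy f q‖)
    (harm : ∀ q ∈ U, pdx (pdx f) q + pdy (pdy f) q = 0)
    (hiso : IsIsotropic1On f U) :
    ∀ p ∈ U, (inner ℝ (pdx (pdx (pdx f)) p) (pdx f p) : ℝ)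
      = inner ℝ (pdx (pdx (pdy f)) p) (pdy f p) := by
  intro p hp
  have hdx : DifferentiableAt ℝ (pdx f) p := diffAt_of_cd (contDiffOn_pdx hf hU) hU hp
  have hdy : DifferentiableAt ℝ (pdy f) p := diffAt_of_cd (contDiffOn_pdy hf hU) hU hp
  have hdxx : DifferentiableAt ℝ (pdx (pdx f)) p :=
    diffAt_of_cd (contDiffOn_pdx (contDiffOn_pdx hf hU) hU) hU hp
  have hdxy : DifferentiableAt ℝ (pdx (pdy f)) p :=
    diffAt_of_cd (contDiffOn_pdx (contDiffOn_pdy hf hU) hU) hU hp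
  have rel := diff_inner_eq hU (g := pdx (pdx f)) (h := pdx f) (k := pdx (pdy f)) (l := pdy f)
    (rel_a hf hU hconf1) hp hdxx hdx hdxy hdy (1, 0)
  have rel' : (inner ℝ (pdx (pdx f) p) (pdx (pdx f) p) : ℝ)
        + inner ℝ (pdx (pdx (pdx f)) p) (pdx f p)
      = (inner ℝ (pdx (pdy f) p) (pdx (pdy f) p) : ℝ)
        + inner ℝ (pdx (pdx (pdy f)) p) (pdy f p) := rel
  have hB := (rel_B hf hU harm hiso p hp).1
  linarith

lemma rel_c2 (hf : ContDiffOn ℝ (⊤ : ℕ∞) f U) (hU : IsOpen U)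
    (hconf1 : ∀ q ∈ U, ‖pdx f q‖ = ‖pdy f q‖)
    (harm : ∀ q ∈ U, pdx (pdx f) q + pdy (pdy f) q = 0)
    (hiso : IsIsotropic1On f U) :
    ∀ p ∈ U, (inner ℝ (pdx (pdx (pdy f)) p) (pdx f p) : ℝ)
      = -inner ℝ (pdx (pdx (pdx f)) p) (pdy f p) := by
  intro p hp
  have hdx : DifferentiableAt ℝ (pdx f) p := diffAt_of_cd (contDiffOn_pdx hf hU) hU hp
  have hdy : DifferentiableAt ℝ (pdy f) p := diffAt_of_cd (contDiffOn_pdy hf hU) hU hp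
  have hdxx : DifferentiableAt ℝ (pdx (pdx f)) p :=
    diffAt_of_cd (contDiffOn_pdx (contDiffOn_pdx hf hU) hU) hU hp
  have hdxy : DifferentiableAt ℝ (pdx (pdy f)) p :=
    diffAt_of_cd (contDiffOn_pdx (contDiffOn_pdy hf hU) hU) hU hp
  have rel := diff_inner_eq hU (g := pdx (pdx f)) (h := pdx f) (k := pdx (pdy f)) (l := pdy f)
    (rel_a hf hU hconf1) hp hdxx hdx hdxy hdy (0, 1)
  have rel' : (inner ℝ (pdx (pdx f) p) (pdy (pdx f) p) : ℝ)
        + inner ℝ (pdy (pdx (pdx f)) p) (pdx f p)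
      = (inner ℝ (pdx (pdy f) p) (pdy (pdy f) p) : ℝ)
        + inner ℝ (pdy (pdx (pdy f)) p) (pdy f p) := rel
  rw [← pdx_pdy_symm hf hU hp, e_yxx hf hU harm hp, harm0 harm p hp,
    e_yxy hf hU harm hp] at rel'
  simp only [inner_neg_right, inner_neg_left] at rel'
  have hB := (rel_B hf hU harm hiso p hp).2
  have c := real_inner_comm (pdx (pdx f) p) (pdx (pdy f) p)
  linarith

lemma rel_d1 (hf : ContDiffOn ℝ (⊤ : ℕ∞) f U) (hU : IsOpen U)
    (harm : ∀ q ∈ U, pdx (pdx f) q + pdy (pdy f) q = 0)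
    (hiso : IsIsotropic1On f U) :
    ∀ p ∈ U, (inner ℝ (pdx (pdx (pdx f)) p) (pdx (pdx f) p) : ℝ)
      = inner ℝ (pdx (pdx (pdy f)) p) (pdx (pdy f) p) := by
  intro p hp
  have hdxx : DifferentiableAt ℝ (pdx (pdx f)) p :=
    diffAt_of_cd (contDiffOn_pdx (contDiffOn_pdx hf hU) hU) hU hp
  have hdxy : DifferentiableAt ℝ (pdx (pdy f)) p :=
    diffAt_of_cd (contDiffOn_pdx (contDiffOn_pdy hf hU) hU) hU hp
  have rel := diff_inner_eq hU (g := pdx (pdx f)) (h := pdx (pdx f)) (k := pdx (pdy f))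
    (l := pdx (pdy f)) (fun q hq => (rel_B hf hU harm hiso q hq).1) hp hdxx hdxx hdxy hdxy (1, 0)
  have rel' : (inner ℝ (pdx (pdx f) p) (pdx (pdx (pdx f)) p) : ℝ)
        + inner ℝ (pdx (pdx (pdx f)) p) (pdx (pdx f) p)
      = (inner ℝ (pdx (pdy f) p) (pdx (pdx (pdy f)) p) : ℝ)
        + inner ℝ (pdx (pdx (pdy f)) p) (pdx (pdy f) p) := rel
  have c1 := real_inner_comm (pdx (pdx f) p) (pdx (pdx (pdx f)) p)
  have c2 := real_inner_comm (pdx (pdy f) p) (pdx (pdx (pdy f)) p)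
  linarith

lemma rel_d2 (hf : ContDiffOn ℝ (⊤ : ℕ∞) f U) (hU : IsOpen U)
    (harm : ∀ q ∈ U, pdx (pdx f) q + pdy (pdy f) q = 0)
    (hiso : IsIsotropic1On f U) :
    ∀ p ∈ U, (inner ℝ (pdx (pdx (pdx f)) p) (pdx (pdy f) p) : ℝ)
      = -inner ℝ (pdx (pdx (pdy f)) p) (pdx (pdx f) p) := by
  intro p hp
  have hdxx : DifferentiableAt ℝ (pdx (pdx f)) p :=
    diffAt_of_cd (contDiffOn_pdx (contDiffOn_pdx hf hU) hU) hU hp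
  have hdxy : DifferentiableAt ℝ (pdx (pdy f)) p :=
    diffAt_of_cd (contDiffOn_pdx (contDiffOn_pdy hf hU) hU) hU hp
  have rel := diff_inner_zero hU (g := pdx (pdx f)) (h := pdx (pdy f))
    (fun q hq => (rel_B hf hU harm hiso q hq).2) hp hdxx hdxy (1, 0)
  have rel' : (inner ℝ (pdx (pdx f) p) (pdx (pdx (pdy f)) p) : ℝ)
        + inner ℝ (pdx (pdx (pdx f)) p) (pdx (pdy f) p) = 0 := rel
  have c := real_inner_comm (pdx (pdx f) p) (pdx (pdx (pdy f)) p)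
  linarith

end Relations2

section ProjHelpers

variable {n : ℕ}

lemma inner_span_zero {S : Set (Euc n)} {x : Euc n} (hx : ∀ s ∈ S, (inner ℝ x s : ℝ) = 0) :
    ∀ w ∈ span ℝ S, (inner ℝ x w : ℝ) = 0 := by
  intro w hw
  induction hw using Submodule.span_induction with
  | mem s hs => exact hx s hs
  | zero => simp
  | add y z _ _ hy hz => simp [inner_add_right, hy, hz]
  | smul c y _ hy => simp [inner_smul_right, hy]

lemma projSub_add_smul (K : Submodule ℝ (Euc n)) (a b : ℝ) (x y : Euc n) :
    projSub K (a • x + b • y) = a • projSub K x + b • projSub K y := by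
  unfold projSub
  rw [map_add, map_smul, map_smul]
  rfl

lemma projSub_neg (K : Submodule ℝ (Euc n)) (x : Euc n) :
    projSub K (-x) = -projSub K x := by
  unfold projSub
  rw [map_neg]
  rfl

lemma proj_pair {e₁ e₂ : Euc n} (w : Euc n) (h12 : (inner ℝ e₁ e₂ : ℝ) = 0)
    (h1 : (inner ℝ e₁ e₁ : ℝ) ≠ 0) (h2 : (inner ℝ e₂ e₂ : ℝ) ≠ 0) :
    projSub (span ℝ {e₁, e₂}) w
      = ((inner ℝ w e₁ : ℝ) / (inner ℝ e₁ e₁ : ℝ)) • e₁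
        + ((inner ℝ w e₂ : ℝ) / (inner ℝ e₂ e₂ : ℝ)) • e₂ := by
  have h21 : (inner ℝ e₂ e₁ : ℝ) = 0 := by rw [real_inner_comm]; exact h12
  unfold projSub
  apply eq_starProjection_of_mem_of_inner_eq_zero
  · exact add_mem (smul_mem _ _ (subset_span (by simp))) (smul_mem _ _ (subset_span (by simp)))
  · apply inner_span_zero
    intro s hs
    simp only [Set.mem_insert_iff, Set.mem_singleton_iff] at hs
    rcases hs with rfl | rfl
    · simp only [inner_sub_left, inner_add_left, real_inner_smul_left, h21,
        mul_zero, add_zero, zero_add]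
      rw [div_mul_cancel₀ _ h1, sub_self]
    · simp only [inner_sub_left, inner_add_left, real_inner_smul_left, h12,
        mul_zero, add_zero, zero_add]
      rw [div_mul_cancel₀ _ h2, sub_self]

lemma proj_quad {e₁ e₂ e₃ e₄ : Euc n} (w : Euc n)
    (h12 : (inner ℝ e₁ e₂ : ℝ) = 0) (h13 : (inner ℝ e₁ e₃ : ℝ) = 0) (h14 : (inner ℝ e₁ e₄ : ℝ) = 0)
    (h23 : (inner ℝ e₂ e₃ : ℝ) = 0) (h24 : (inner ℝ e₂ e₄ : ℝ) = 0) (h34 : (inner ℝ e₃ e₄ : ℝ) = 0)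
    (h1 : (inner ℝ e₁ e₁ : ℝ) ≠ 0) (h2 : (inner ℝ e₂ e₂ : ℝ) ≠ 0)
    (h3 : (inner ℝ e₃ e₃ : ℝ) ≠ 0) (h4 : (inner ℝ e₄ e₄ : ℝ) ≠ 0) :
    projSub (span ℝ {e₁, e₂} ⊔ span ℝ {e₃, e₄, -e₃}) w
      = ((inner ℝ w e₁ : ℝ) / (inner ℝ e₁ e₁ : ℝ)) • e₁
        + ((inner ℝ w e₂ : ℝ) / (inner ℝ e₂ e₂ : ℝ)) • e₂
        + ((inner ℝ w e₃ : ℝ) / (inner ℝ e₃ e₃ : ℝ)) • e₃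
        + ((inner ℝ w e₄ : ℝ) / (inner ℝ e₄ e₄ : ℝ)) • e₄ := by
  have h21 : (inner ℝ e₂ e₁ : ℝ) = 0 := by rw [real_inner_comm]; exact h12
  have h31 : (inner ℝ e₃ e₁ : ℝ) = 0 := by rw [real_inner_comm]; exact h13
  have h41 : (inner ℝ e₄ e₁ : ℝ) = 0 := by rw [real_inner_comm]; exact h14
  have h32 : (inner ℝ e₃ e₂ : ℝ) = 0 := by rw [real_inner_comm]; exact h23
  have h42 : (inner ℝ e₄ e₂ : ℝ) = 0 := by rw [real_inner_comm]; exact h24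
  have h43 : (inner ℝ e₄ e₃ : ℝ) = 0 := by rw [real_inner_comm]; exact h34
  rw [← Submodule.span_union]
  unfold projSub
  apply eq_starProjection_of_mem_of_inner_eq_zero
  · refine add_mem (add_mem (add_mem ?_ ?_) ?_) ?_ <;>
      exact smul_mem _ _ (subset_span (by simp))
  · apply inner_span_zero
    intro s hs
    simp only [Set.mem_union, Set.mem_insert_iff, Set.mem_singleton_iff] at hs
    have L : ∀ (g : Euc n) (hg : (inner ℝ g g : ℝ) ≠ 0), True := fun _ _ => trivial
    rcases hs with (rfl | rfl) | rfl | rfl | rfl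
    · simp only [inner_sub_left, inner_add_left, real_inner_smul_left,
        h12, h13, h14, h21, h23, h24, h31, h32, h34, h41, h42, h43,
        mul_zero, add_zero, zero_add]
      rw [div_mul_cancel₀ _ h1, sub_self]
    · simp only [inner_sub_left, inner_add_left, real_inner_smul_left,
        h12, h13, h14, h21, h23, h24, h31, h32, h34, h41, h42, h43,
        mul_zero, add_zero, zero_add]
      rw [div_mul_cancel₀ _ h2, sub_self]
    · simp only [inner_sub_left, inner_add_left, real_inner_smul_left,
        h12, h13, h14, h21, h23, h24, h31, h32, h34, h41, h42, h43,
        mul_zero, add_zero, zero_add]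
      rw [div_mul_cancel₀ _ h3, sub_self]
    · simp only [inner_sub_left, inner_add_left, real_inner_smul_left,
        h12, h13, h14, h21, h23, h24, h31, h32, h34, h41, h42, h43,
        mul_zero, add_zero, zero_add]
      rw [div_mul_cancel₀ _ h4, sub_self]
    · simp only [inner_neg_right, inner_sub_left, inner_add_left, real_inner_smul_left,
        h12, h13, h14, h21, h23, h24, h31, h32, h34, h41, h42, h43,
        mul_zero, add_zero, zero_add]
      rw [div_mul_cancel₀ _ h3, sub_self, neg_zero]

end ProjHelpers
section Expand

variable {n : ℕ}

lemma expand2 (x y e1 e2 : Euc n) (c1 c2 d1 d2 : ℝ) :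
    (inner ℝ (x - (c1 • e1 + c2 • e2)) (y - (d1 • e1 + d2 • e2)) : ℝ)
      = (inner ℝ x y : ℝ) - d1 * inner ℝ x e1 - d2 * inner ℝ x e2
        - c1 * inner ℝ e1 y - c2 * inner ℝ e2 y
        + c1 * d1 * inner ℝ e1 e1 + c1 * d2 * inner ℝ e1 e2
        + c2 * d1 * inner ℝ e2 e1 + c2 * d2 * inner ℝ e2 e2 := by
  simp only [inner_sub_left, inner_sub_right, inner_add_left, inner_add_right,
    real_inner_smul_left, real_inner_smul_right]
  ring

lemma expand2R (y x e1 e2 : Euc n) (c1 c2 : ℝ) :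
    (inner ℝ y (x - (c1 • e1 + c2 • e2)) : ℝ)
      = (inner ℝ y x : ℝ) - c1 * inner ℝ y e1 - c2 * inner ℝ y e2 := by
  simp only [inner_sub_right, inner_add_right, real_inner_smul_right]
  ring

lemma expand4 (x y e1 e2 e3 e4 : Euc n) (c1 c2 c3 c4 d1 d2 d3 d4 : ℝ) :
    (inner ℝ (x - (c1 • e1 + c2 • e2 + c3 • e3 + c4 • e4))
        (y - (d1 • e1 + d2 • e2 + d3 • e3 + d4 • e4)) : ℝ)
      = (inner ℝ x y : ℝ)
        - d1 * inner ℝ x e1 - d2 * inner ℝ x e2 - d3 * inner ℝ x e3 - d4 * inner ℝ x e4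
        - c1 * inner ℝ e1 y - c2 * inner ℝ e2 y - c3 * inner ℝ e3 y - c4 * inner ℝ e4 y
        + c1 * d1 * inner ℝ e1 e1 + c1 * d2 * inner ℝ e1 e2
        + c1 * d3 * inner ℝ e1 e3 + c1 * d4 * inner ℝ e1 e4
        + c2 * d1 * inner ℝ e2 e1 + c2 * d2 * inner ℝ e2 e2
        + c2 * d3 * inner ℝ e2 e3 + c2 * d4 * inner ℝ e2 e4
        + c3 * d1 * inner ℝ e3 e1 + c3 * d2 * inner ℝ e3 e2
        + c3 * d3 * inner ℝ e3 e3 + c3 * d4 * inner ℝ e3 e4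
        + c4 * d1 * inner ℝ e4 e1 + c4 * d2 * inner ℝ e4 e2
        + c4 * d3 * inner ℝ e4 e3 + c4 * d4 * inner ℝ e4 e4 := by
  simp only [inner_sub_left, inner_sub_right, inner_add_left, inner_add_right,
    real_inner_smul_left, real_inner_smul_right]
  ring

end Expand

section KeyPoint

variable {n : ℕ} {U : Set (ℝ × ℝ)} {f : ℝ × ℝ → Euc n}

lemma nProj_neg (f : ℝ × ℝ → Euc n) (p : ℝ × ℝ) (x : Euc n) :
    nProj f p (-x) = -nProj f p x := by
  unfold nProj
  rw [projSub_neg]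
  abel

lemma mem_orthogonal_inner {K : Submodule ℝ (Euc n)} {x y : Euc n}
    (hx : x ∈ Kᗮ) (hy : y ∈ K) : (inner ℝ y x : ℝ) = 0 :=
  (Submodule.mem_orthogonal K x).mp hx y hy

lemma nProj_mem_orth (f : ℝ × ℝ → Euc n) (p : ℝ × ℝ) (x : Euc n) :
    nProj f p x ∈ (TangentSp f p)ᗮ :=
  sub_starProjection_mem_orthogonal (K := TangentSp f p) x

set_option maxHeartbeats 2000000 in
lemma key_point (hU : IsOpen U) (hf : ContDiffOn ℝ (⊤ : ℕ∞) f U)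
    (hconf0 : ∀ q ∈ U, (inner ℝ (pdx f q) (pdy f q) : ℝ) = 0)
    (hconf1 : ∀ q ∈ U, ‖pdx f q‖ = ‖pdy f q‖)
    (harm : ∀ q ∈ U, pdx (pdx f) q + pdy (pdy f) q = 0)
    (hiso : IsIsotropic1On f U) {p : ℝ × ℝ} (hp : p ∈ U)
    (hfx : (inner ℝ (pdx f p) (pdx f p) : ℝ) ≠ 0)
    (hrank : finrank ℝ (N1 f p) = 2) :
    ((inner ℝ (nProj2 f p (pdx (pdx (pdx f)) p)) (nProj2 f p (pdx (pdx (pdy f)) p)) : ℝ)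
        = inner ℝ (pdx (pdx (pdx f)) p) (pdx (pdx (pdy f)) p))
      ∧ ((inner ℝ (nProj2 f p (pdx (pdx (pdx f)) p)) (nProj2 f p (pdx (pdx (pdx f)) p)) : ℝ)
          - inner ℝ (nProj2 f p (pdx (pdx (pdy f)) p)) (nProj2 f p (pdx (pdx (pdy f)) p))
        = (inner ℝ (pdx (pdx (pdx f)) p) (pdx (pdx (pdx f)) p) : ℝ)
          - inner ℝ (pdx (pdx (pdy f)) p) (pdx (pdx (pdy f)) p)) := by
  -- Gram matrix facts
  have hyy : (inner ℝ (pdy f p) (pdy f p) : ℝ) = inner ℝ (pdx f p) (pdx f p) := by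
    rw [real_inner_self_eq_norm_sq, real_inner_self_eq_norm_sq, hconf1 p hp]
  have hyyne : (inner ℝ (pdy f p) (pdy f p) : ℝ) ≠ 0 := by rw [hyy]; exact hfx
  have r8 : (inner ℝ (pdx f p) (pdy f p) : ℝ) = 0 := hconf0 p hp
  have r9 : (inner ℝ (pdy f p) (pdx f p) : ℝ) = 0 := by rw [real_inner_comm]; exact r8
  have r1 : (inner ℝ (pdx f p) (pdx (pdx f) p) : ℝ) = inner ℝ (pdx (pdx f) p) (pdx f p) :=
    real_inner_comm _ _
  have r3 : (inner ℝ (pdx (pdx f) p) (pdy f p) : ℝ) = -inner ℝ (pdx (pdy f) p) (pdx f p) :=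
    rel_b hf hU hconf0 p hp
  have r2 : (inner ℝ (pdy f p) (pdx (pdx f) p) : ℝ) = -inner ℝ (pdx (pdy f) p) (pdx f p) := by
    rw [real_inner_comm]; exact r3
  have r4 : (inner ℝ (pdx f p) (pdx (pdy f) p) : ℝ) = inner ℝ (pdx (pdy f) p) (pdx f p) :=
    real_inner_comm _ _
  have r6 : (inner ℝ (pdx (pdy f) p) (pdy f p) : ℝ) = inner ℝ (pdx (pdx f) p) (pdx f p) :=
    (rel_a hf hU hconf1 p hp).symm
  have r5 : (inner ℝ (pdy f p) (pdx (pdy f) p) : ℝ) = inner ℝ (pdx (pdx f) p) (pdx f p) := by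
    rw [real_inner_comm]; exact r6
  have r10 : (inner ℝ (pdx (pdy f) p) (pdx (pdy f) p) : ℝ)
      = inner ℝ (pdx (pdx f) p) (pdx (pdx f) p) := ((rel_B hf hU harm hiso p hp).1).symm
  have r11 : (inner ℝ (pdx (pdx f) p) (pdx (pdy f) p) : ℝ) = 0 := (rel_B hf hU harm hiso p hp).2
  have r12 : (inner ℝ (pdx (pdy f) p) (pdx (pdx f) p) : ℝ) = 0 := by
    rw [real_inner_comm]; exact r11
  -- third-derivative Gram facts
  have r13 : (inner ℝ (pdx f p) (pdx (pdx (pdx f)) p) : ℝ)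
      = inner ℝ (pdx (pdx (pdx f)) p) (pdx f p) := real_inner_comm _ _
  have r14 : (inner ℝ (pdy f p) (pdx (pdx (pdx f)) p) : ℝ)
      = inner ℝ (pdx (pdx (pdx f)) p) (pdy f p) := real_inner_comm _ _
  have r15 : (inner ℝ (pdx (pdx f) p) (pdx (pdx (pdx f)) p) : ℝ)
      = inner ℝ (pdx (pdx (pdx f)) p) (pdx (pdx f) p) := real_inner_comm _ _
  have r16 : (inner ℝ (pdx (pdy f) p) (pdx (pdx (pdx f)) p) : ℝ)
      = inner ℝ (pdx (pdx (pdx f)) p) (pdx (pdy f) p) := real_inner_comm _ _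
  have rv1 : (inner ℝ (pdx (pdx (pdy f)) p) (pdx f p) : ℝ)
      = -inner ℝ (pdx (pdx (pdx f)) p) (pdy f p) := rel_c2 hf hU hconf1 harm hiso p hp
  have rv1' : (inner ℝ (pdx f p) (pdx (pdx (pdy f)) p) : ℝ)
      = -inner ℝ (pdx (pdx (pdx f)) p) (pdy f p) := by rw [real_inner_comm]; exact rv1
  have rv2 : (inner ℝ (pdx (pdx (pdy f)) p) (pdy f p) : ℝ)
      = inner ℝ (pdx (pdx (pdx f)) p) (pdx f p) := (rel_c1 hf hU hconf1 harm hiso p hp).symm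
  have rv2' : (inner ℝ (pdy f p) (pdx (pdx (pdy f)) p) : ℝ)
      = inner ℝ (pdx (pdx (pdx f)) p) (pdx f p) := by rw [real_inner_comm]; exact rv2
  have rv3 : (inner ℝ (pdx (pdx (pdy f)) p) (pdx (pdx f) p) : ℝ)
      = -inner ℝ (pdx (pdx (pdx f)) p) (pdx (pdy f) p) := by
    rw [rel_d2 hf hU harm hiso p hp]; ring_nf
  have rv3' : (inner ℝ (pdx (pdx f) p) (pdx (pdx (pdy f)) p) : ℝ)
      = -inner ℝ (pdx (pdx (pdx f)) p) (pdx (pdy f) p) := by rw [real_inner_comm]; exact rv3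
  have rv4 : (inner ℝ (pdx (pdx (pdy f)) p) (pdx (pdy f) p) : ℝ)
      = inner ℝ (pdx (pdx (pdx f)) p) (pdx (pdx f) p) := (rel_d1 hf hU harm hiso p hp).symm
  have rv4' : (inner ℝ (pdx (pdy f) p) (pdx (pdx (pdy f)) p) : ℝ)
      = inner ℝ (pdx (pdx (pdx f)) p) (pdx (pdx f) p) := by rw [real_inner_comm]; exact rv4
  -- explicit tangential projections
  have hα : a11 f p = pdx (pdx f) p
      - (((inner ℝ (pdx (pdx f) p) (pdx f p) : ℝ) / (inner ℝ (pdx f p) (pdx f p) : ℝ)) • pdx f p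
        + ((inner ℝ (pdx (pdx f) p) (pdy f p) : ℝ) / (inner ℝ (pdy f p) (pdy f p) : ℝ)) • pdy f p) := by
    show pdx (pdx f) p - projSub (span ℝ {pdx f p, pdy f p}) (pdx (pdx f) p) = _
    rw [proj_pair _ r8 hfx hyyne]
  have hβ : a12 f p = pdx (pdy f) p
      - (((inner ℝ (pdx (pdy f) p) (pdx f p) : ℝ) / (inner ℝ (pdx f p) (pdx f p) : ℝ)) • pdx f p
        + ((inner ℝ (pdx (pdy f) p) (pdy f p) : ℝ) / (inner ℝ (pdy f p) (pdy f p) : ℝ)) • pdy f p) := by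
    show pdx (pdy f) p - projSub (span ℝ {pdx f p, pdy f p}) (pdx (pdy f) p) = _
    rw [proj_pair _ r8 hfx hyyne]
  -- orthogonality of a11, a12 to the tangent plane
  have hfxT : pdx f p ∈ TangentSp f p := subset_span (by simp)
  have hfyT : pdy f p ∈ TangentSp f p := subset_span (by simp)
  have gfxα : (inner ℝ (pdx f p) (a11 f p) : ℝ) = 0 :=
    mem_orthogonal_inner (nProj_mem_orth f p _) hfxT
  have gfyα : (inner ℝ (pdy f p) (a11 f p) : ℝ) = 0 :=
    mem_orthogonal_inner (nProj_mem_orth f p _) hfyT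
  have gfxβ : (inner ℝ (pdx f p) (a12 f p) : ℝ) = 0 :=
    mem_orthogonal_inner (nProj_mem_orth f p _) hfxT
  have gfyβ : (inner ℝ (pdy f p) (a12 f p) : ℝ) = 0 :=
    mem_orthogonal_inner (nProj_mem_orth f p _) hfyT
  have gαfx : (inner ℝ (a11 f p) (pdx f p) : ℝ) = 0 := by rw [real_inner_comm]; exact gfxα
  have gαfy : (inner ℝ (a11 f p) (pdy f p) : ℝ) = 0 := by rw [real_inner_comm]; exact gfyα
  have gβfx : (inner ℝ (a12 f p) (pdx f p) : ℝ) = 0 := by rw [real_inner_comm]; exact gfxβ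
  have gβfy : (inner ℝ (a12 f p) (pdy f p) : ℝ) = 0 := by rw [real_inner_comm]; exact gfyβ
  -- inner ℝ products among a11, a12
  have gαβ : (inner ℝ (a11 f p) (a12 f p) : ℝ) = 0 := by
    rw [hα, hβ, expand2]
    simp only [r1, r2, r3, r4, r5, r6, r8, r9, r10, r11, r12, hyy]
    field_simp
    ring
  have gββ : (inner ℝ (a12 f p) (a12 f p) : ℝ) = inner ℝ (a11 f p) (a11 f p) := by
    rw [hβ, hα, expand2, expand2]
    simp only [r1, r2, r3, r4, r5, r6, r8, r9, r10, r11, r12, hyy]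
    field_simp
    ring
  -- a22 = -a11
  have ha22 : a22 f p = -a11 f p := by
    show nProj f p (pdy (pdy f) p) = -nProj f p (pdx (pdx f) p)
    rw [harm0 harm p hp, nProj_neg]
  -- σ² ≠ 0 from rank N₁ = 2
  have hσne : (inner ℝ (a11 f p) (a11 f p) : ℝ) ≠ 0 := by
    intro h0
    have hα0 : a11 f p = 0 := inner_self_eq_zero.mp h0
    have hβ0 : a12 f p = 0 := inner_self_eq_zero.mp (by rw [gββ]; exact h0)
    have hbot : N1 f p = ⊥ := by
      rw [eq_bot_iff]
      show span ℝ {a11 f p, a12 f p, a22 f p} ≤ ⊥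
      rw [Submodule.span_le]
      intro x hx
      simp only [ha22, hα0, hβ0, neg_zero, Set.mem_insert_iff, Set.mem_singleton_iff] at hx
      rcases hx with rfl | rfl | rfl <;> simp
    rw [hbot] at hrank
    simp [finrank_bot] at hrank
  have hββne : (inner ℝ (a12 f p) (a12 f p) : ℝ) ≠ 0 := by rw [gββ]; exact hσne
  -- relations between v and a11, a12
  have gvα : (inner ℝ (pdx (pdx (pdy f)) p) (a11 f p) : ℝ)
      = -inner ℝ (pdx (pdx (pdx f)) p) (a12 f p) := by
    rw [hα, hβ, expand2R, expand2R]
    simp only [rv1, rv2, rv3, rv4, r1, r2, r3, r4, r5, r6, r8, r9, hyy]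
    field_simp
    ring
  have gvβ : (inner ℝ (pdx (pdx (pdy f)) p) (a12 f p) : ℝ)
      = inner ℝ (pdx (pdx (pdx f)) p) (a11 f p) := by
    rw [hα, hβ, expand2R, expand2R]
    simp only [rv1, rv2, rv3, rv4, r1, r2, r3, r4, r5, r6, r8, r9, hyy]
    field_simp
    ring
  have gαv : (inner ℝ (a11 f p) (pdx (pdx (pdy f)) p) : ℝ)
      = -inner ℝ (pdx (pdx (pdx f)) p) (a12 f p) := by rw [real_inner_comm]; exact gvα
  have gβv : (inner ℝ (a12 f p) (pdx (pdx (pdy f)) p) : ℝ)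
      = inner ℝ (pdx (pdx (pdx f)) p) (a11 f p) := by rw [real_inner_comm]; exact gvβ
  have gαu : (inner ℝ (a11 f p) (pdx (pdx (pdx f)) p) : ℝ)
      = inner ℝ (pdx (pdx (pdx f)) p) (a11 f p) := real_inner_comm _ _
  have gβu : (inner ℝ (a12 f p) (pdx (pdx (pdx f)) p) : ℝ)
      = inner ℝ (pdx (pdx (pdx f)) p) (a12 f p) := real_inner_comm _ _
  have gβα : (inner ℝ (a12 f p) (a11 f p) : ℝ) = 0 := by rw [real_inner_comm]; exact gαβ
  -- explicit projection onto T ⊕ N₁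
  have hN1eq : N1 f p = span ℝ {a11 f p, a12 f p, -a11 f p} := by
    show span ℝ {a11 f p, a12 f p, a22 f p} = _
    rw [ha22]
  have hproj : ∀ w : Euc n, projSub (TangentSp f p ⊔ N1 f p) w
      = ((inner ℝ w (pdx f p) : ℝ) / (inner ℝ (pdx f p) (pdx f p) : ℝ)) • pdx f p
        + ((inner ℝ w (pdy f p) : ℝ) / (inner ℝ (pdy f p) (pdy f p) : ℝ)) • pdy f p
        + ((inner ℝ w (a11 f p) : ℝ) / (inner ℝ (a11 f p) (a11 f p) : ℝ)) • a11 f p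
        + ((inner ℝ w (a12 f p) : ℝ) / (inner ℝ (a12 f p) (a12 f p) : ℝ)) • a12 f p := by
    intro w
    have hWeq : TangentSp f p ⊔ N1 f p
        = span ℝ {pdx f p, pdy f p} ⊔ span ℝ {a11 f p, a12 f p, -a11 f p} := by
      rw [hN1eq]
      rfl
    rw [hWeq]
    exact proj_quad w r8 gfxα gfxβ gfyα gfyβ gαβ hfx hyyne hσne hββne
  have hA : nProj2 f p (pdx (pdx (pdx f)) p) = pdx (pdx (pdx f)) p
      - (((inner ℝ (pdx (pdx (pdx f)) p) (pdx f p) : ℝ) / (inner ℝ (pdx f p) (pdx f p) : ℝ)) • pdx f p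
        + ((inner ℝ (pdx (pdx (pdx f)) p) (pdy f p) : ℝ) / (inner ℝ (pdy f p) (pdy f p) : ℝ)) • pdy f p
        + ((inner ℝ (pdx (pdx (pdx f)) p) (a11 f p) : ℝ) / (inner ℝ (a11 f p) (a11 f p) : ℝ)) • a11 f p
        + ((inner ℝ (pdx (pdx (pdx f)) p) (a12 f p) : ℝ) / (inner ℝ (a12 f p) (a12 f p) : ℝ)) • a12 f p) := by
    show pdx (pdx (pdx f)) p - projSub (TangentSp f p ⊔ N1 f p) (pdx (pdx (pdx f)) p) = _
    rw [hproj]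
  have hB : nProj2 f p (pdx (pdx (pdy f)) p) = pdx (pdx (pdy f)) p
      - (((inner ℝ (pdx (pdx (pdy f)) p) (pdx f p) : ℝ) / (inner ℝ (pdx f p) (pdx f p) : ℝ)) • pdx f p
        + ((inner ℝ (pdx (pdx (pdy f)) p) (pdy f p) : ℝ) / (inner ℝ (pdy f p) (pdy f p) : ℝ)) • pdy f p
        + ((inner ℝ (pdx (pdx (pdy f)) p) (a11 f p) : ℝ) / (inner ℝ (a11 f p) (a11 f p) : ℝ)) • a11 f p
        + ((inner ℝ (pdx (pdx (pdy f)) p) (a12 f p) : ℝ) / (inner ℝ (a12 f p) (a12 f p) : ℝ)) • a12 f p) := by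
    show pdx (pdx (pdy f)) p - projSub (TangentSp f p ⊔ N1 f p) (pdx (pdx (pdy f)) p) = _
    rw [hproj]
  constructor
  · rw [hA, hB, expand4]
    simp only [r8, r9, r13, r14, r15, r16, rv1, rv1', rv2, rv2', rv3, rv3', rv4, rv4',
      gfxα, gfyα, gfxβ, gfyβ, gαfx, gαfy, gβfx, gβfy, gαβ, gβα, gββ, gvα, gvβ, gαv, gβv,
      gαu, gβu, hyy]
    field_simp
    ring
  · rw [hA, hB, expand4, expand4]
    simp only [r8, r9, r13, r14, r15, r16, rv1, rv1', rv2, rv2', rv3, rv3', rv4, rv4',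
      gfxα, gfyα, gfxβ, gfyβ, gαfx, gαfy, gβfx, gβfy, gαβ, gβα, gββ, gvα, gvβ, gαv, gβv,
      gαu, gβu, hyy]
    field_simp
    ring

end KeyPoint

section FinalHelpers

variable {n : ℕ}

lemma reV_formula (u v : Euc n) : reV (cx u - Complex.I • cx v) = u := by
  ext k
  have h : (cx u - Complex.I • cx v) k = (u k : ℂ) - Complex.I * (v k : ℂ) := rfl
  show ((cx u - Complex.I • cx v) k).re = u k
  rw [h]
  simp

lemma imV_formula (u v : Euc n) : imV (cx u - Complex.I • cx v) = -v := by
  ext k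
  have h : (cx u - Complex.I • cx v) k = (u k : ℂ) - Complex.I * (v k : ℂ) := rfl
  show ((cx u - Complex.I • cx v) k).im = (-v) k
  rw [h]
  have h2 : (-v) k = -(v k) := rfl
  rw [h2]
  simp

lemma nProj2_neg (f : ℝ × ℝ → Euc n) (p : ℝ × ℝ) (x : Euc n) :
    nProj2 f p (-x) = -nProj2 f p x := by
  unfold nProj2
  rw [projSub_neg]
  abel

lemma nProj2_comb (f : ℝ × ℝ → Euc n) (p : ℝ × ℝ) (a b : ℝ) (x y : Euc n) :
    nProj2 f p (a • x + b • y) = a • nProj2 f p x + b • nProj2 f p y := by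
  unfold nProj2
  rw [projSub_add_smul]
  module

lemma nProj2C_formula (f : ℝ × ℝ → Euc n) (p : ℝ × ℝ) (u v : Euc n) :
    nProj2C f p (cx u - Complex.I • cx v)
      = cx (nProj2 f p u) - Complex.I • cx (nProj2 f p v) := by
  unfold nProj2C
  rw [reV_formula, imV_formula, nProj2_neg, cx_neg, smul_neg, ← sub_eq_add_neg]

lemma inner_comb_self (A B : Euc n) (C S : ℝ) :
    (inner ℝ (C • A + S • B) (C • A + S • B) : ℝ)
      = C ^ 2 * inner ℝ A A + 2 * C * S * inner ℝ A B + S ^ 2 * inner ℝ B B := by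
  simp only [inner_add_left, inner_add_right, real_inner_smul_left, real_inner_smul_right]
  rw [real_inner_comm B A]
  ring

end FinalHelpers

set_option maxHeartbeats 1000000 in
/-- For a 1-isotropic minimal surface, ⟪P₂ᶜφ″,P₂ᶜφ″⟫ = ⟪φ″,φ″⟫, and the
second curvature ellipse is a circle everywhere iff ⟪φ″,φ″⟫ ≡ 0. -/
theorem second_ellipse_circle_iff_isotropic2
    {n : ℕ} (U : Set (ℝ × ℝ)) (hU : IsOpen U) (hUconn : IsConnected U)
    (f : ℝ × ℝ → Euc n) (hmin : IsMinimalOn f U) (hiso : IsIsotropic1On f U)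
    (hN1 : ∀ p ∈ U, Module.finrank ℝ (N1 f p) = 2) :
    (∀ p ∈ U,
      bil (nProj2C f p (pdz (pdz (phiOf f)) p)) (nProj2C f p (pdz (pdz (phiOf f)) p)) =
        bil (pdz (pdz (phiOf f)) p) (pdz (pdz (phiOf f)) p)) ∧
    ((∀ p ∈ U, ∃ r : ℝ, 0 ≤ r ∧ ∀ θ : ℝ,
        ‖(‖pdx f p‖ ^ 3)⁻¹ • nProj2 f p (dir3 f θ p)‖ = r) ↔
      ∀ p ∈ U, bil (pdz (pdz (phiOf f)) p) (pdz (pdz (phiOf f)) p) = 0) := by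
  obtain ⟨⟨⟨hf, hlin⟩, hconf⟩, harm⟩ := hmin
  have hconf0 : ∀ q ∈ U, (inner ℝ (pdx f q) (pdy f q) : ℝ) = 0 := fun q hq => (hconf q hq).1
  have hconf1 : ∀ q ∈ U, ‖pdx f q‖ = ‖pdy f q‖ := fun q hq => (hconf q hq).2
  have hfx0 : ∀ p ∈ U, pdx f p ≠ 0 := by
    intro p hp h1
    have h2 := (hlin p hp).ne_zero 0
    simp [h1] at h2
  have hfxne : ∀ p ∈ U, (inner ℝ (pdx f p) (pdx f p) : ℝ) ≠ 0 := fun p hp h0 =>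
    hfx0 p hp (inner_self_eq_zero.mp h0)
  have key := fun p (hp : p ∈ U) =>
    key_point hU hf hconf0 hconf1 harm hiso hp (hfxne p hp) (hN1 p hp)
  have hphi : ∀ p ∈ U, pdz (pdz (phiOf f)) p
      = cx (pdx (pdx (pdx f)) p) - Complex.I • cx (pdx (pdx (pdy f)) p) :=
    fun p hp => pdz2_phi hf hU harm hp
  have parta : ∀ p ∈ U,
      bil (nProj2C f p (pdz (pdz (phiOf f)) p)) (nProj2C f p (pdz (pdz (phiOf f)) p)) =
        bil (pdz (pdz (phiOf f)) p) (pdz (pdz (phiOf f)) p) := by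
    intro p hp
    have c1 : (inner ℝ (nProj2 f p (pdx (pdx (pdy f)) p)) (nProj2 f p (pdx (pdx (pdx f)) p))
        : ℝ) = inner ℝ (pdx (pdx (pdx f)) p) (pdx (pdx (pdy f)) p) := by
      rw [real_inner_comm]; exact (key p hp).1
    have c3 : (inner ℝ (pdx (pdx (pdy f)) p) (pdx (pdx (pdx f)) p) : ℝ)
        = inner ℝ (pdx (pdx (pdx f)) p) (pdx (pdx (pdy f)) p) := real_inner_comm _ _
    rw [hphi p hp, nProj2C_formula, bil_formula, bil_formula, c1, (key p hp).1, c3]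
    have h2C : ((inner ℝ (nProj2 f p (pdx (pdx (pdx f)) p)) (nProj2 f p (pdx (pdx (pdx f)) p))
          : ℝ) : ℂ)
          - ((inner ℝ (nProj2 f p (pdx (pdx (pdy f)) p)) (nProj2 f p (pdx (pdx (pdy f)) p))
          : ℝ) : ℂ)
        = ((inner ℝ (pdx (pdx (pdx f)) p) (pdx (pdx (pdx f)) p) : ℝ) : ℂ)
          - ((inner ℝ (pdx (pdx (pdy f)) p) (pdx (pdx (pdy f)) p) : ℝ) : ℂ) := by
      exact_mod_cast congrArg (fun t : ℝ => (t : ℂ)) (key p hp).2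
    linear_combination h2C
  have hdir : ∀ p ∈ U, ∀ θ : ℝ, nProj2 f p (dir3 f θ p)
      = Real.cos (3 * θ) • nProj2 f p (pdx (pdx (pdx f)) p)
        + Real.sin (3 * θ) • nProj2 f p (pdx (pdx (pdy f)) p) := by
    intro p hp θ
    have hs := Real.sin_sq_add_cos_sq θ
    have h1 : dir3 f θ p = Real.cos (3 * θ) • pdx (pdx (pdx f)) p
        + Real.sin (3 * θ) • pdx (pdx (pdy f)) p := by
      unfold dir3
      rw [e_xyy hf hU harm hp, e_yyy hf hU harm hp, Real.cos_three_mul, Real.sin_three_mul]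
      match_scalars
      · linear_combination (-3 * Real.cos θ) * hs
      · linear_combination (3 * Real.sin θ) * hs
    rw [h1, nProj2_comb]
  refine ⟨parta, ?_, ?_⟩
  · -- circle everywhere → ⟪φ″,φ″⟫ = 0
    intro hcirc p hp
    obtain ⟨r, hr0, hr⟩ := hcirc p hp
    have hρ : (0 : ℝ) < ‖pdx f p‖ := norm_pos_iff.mpr (hfx0 p hp)
    have hρ3 : (0 : ℝ) < ‖pdx f p‖ ^ 3 := by positivity
    have hval : ∀ θ : ℝ, (‖pdx f p‖ ^ 3)⁻¹
        * ‖Real.cos (3 * θ) • nProj2 f p (pdx (pdx (pdx f)) p)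
            + Real.sin (3 * θ) • nProj2 f p (pdx (pdx (pdy f)) p)‖ = r := by
      intro θ
      have h1 := hr θ
      rw [hdir p hp θ, norm_smul, Real.norm_eq_abs, _root_.abs_of_nonneg (inv_nonneg.mpr hρ3.le)] at h1
      exact h1
    have hA : ‖nProj2 f p (pdx (pdx (pdx f)) p)‖ = r * ‖pdx f p‖ ^ 3 := by
      have h1 := hval 0
      simp only [mul_zero, Real.cos_zero, Real.sin_zero, one_smul, zero_smul, add_zero] at h1
      field_simp at h1
      linarith
    have hB : ‖nProj2 f p (pdx (pdx (pdy f)) p)‖ = r * ‖pdx f p‖ ^ 3 := by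
      have h1 := hval (Real.pi / 6)
      have e : 3 * (Real.pi / 6) = Real.pi / 2 := by ring
      rw [e, Real.cos_pi_div_two, Real.sin_pi_div_two] at h1
      simp only [zero_smul, one_smul, zero_add] at h1
      field_simp at h1
      linarith
    have hAB : (inner ℝ (nProj2 f p (pdx (pdx (pdx f)) p))
        (nProj2 f p (pdx (pdx (pdy f)) p)) : ℝ) = 0 := by
      have h1 := hval (Real.pi / 12)
      have e : 3 * (Real.pi / 12) = Real.pi / 4 := by ring
      rw [e, Real.cos_pi_div_four, Real.sin_pi_div_four] at h1
      have hw : ‖(Real.sqrt 2 / 2) • nProj2 f p (pdx (pdx (pdx f)) p)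
          + (Real.sqrt 2 / 2) • nProj2 f p (pdx (pdx (pdy f)) p)‖ = r * ‖pdx f p‖ ^ 3 := by
        field_simp at h1
        linarith
      have h2 : (Real.sqrt 2 / 2) ^ 2 = 1 / 2 := by
        rw [div_pow, Real.sq_sqrt] <;> norm_num
      have h3 := inner_comb_self (nProj2 f p (pdx (pdx (pdx f)) p))
        (nProj2 f p (pdx (pdx (pdy f)) p)) (Real.sqrt 2 / 2) (Real.sqrt 2 / 2)
      rw [real_inner_self_eq_norm_sq, real_inner_self_eq_norm_sq, real_inner_self_eq_norm_sq,
        hw, hA, hB] at h3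
      nlinarith [h3, h2]
    have e1 : (inner ℝ (pdx (pdx (pdx f)) p) (pdx (pdx (pdx f)) p) : ℝ)
        - inner ℝ (pdx (pdx (pdy f)) p) (pdx (pdx (pdy f)) p) = 0 := by
      rw [← (key p hp).2, real_inner_self_eq_norm_sq, real_inner_self_eq_norm_sq, hA, hB]
      ring
    have q1 : (inner ℝ (pdx (pdx (pdx f)) p) (pdx (pdx (pdx f)) p) : ℝ)
        = inner ℝ (pdx (pdx (pdy f)) p) (pdx (pdx (pdy f)) p) := by linarith
    have q2 : (inner ℝ (pdx (pdx (pdx f)) p) (pdx (pdx (pdy f)) p) : ℝ) = 0 := by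
      rw [← (key p hp).1]; exact hAB
    have q3 : (inner ℝ (pdx (pdx (pdy f)) p) (pdx (pdx (pdx f)) p) : ℝ) = 0 := by
      rw [real_inner_comm]; exact q2
    rw [hphi p hp, bil_formula, q1, q2, q3]
    simp
  · -- ⟪φ″,φ″⟫ = 0 → circle everywhere
    intro hbil p hp
    have h := hbil p hp
    rw [hphi p hp, bil_formula, Complex.ext_iff] at h
    obtain ⟨hre, him⟩ := h
    simp only [Complex.sub_re, Complex.ofReal_re, Complex.mul_re, Complex.I_re, Complex.I_im,
      Complex.ofReal_im, Complex.sub_im, Complex.mul_im, Complex.add_re, Complex.add_im,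
      Complex.zero_re, Complex.zero_im] at hre him
    have cuv := real_inner_comm (pdx (pdx (pdx f)) p) (pdx (pdx (pdy f)) p)
    have huu : (inner ℝ (pdx (pdx (pdx f)) p) (pdx (pdx (pdx f)) p) : ℝ)
        = inner ℝ (pdx (pdx (pdy f)) p) (pdx (pdx (pdy f)) p) := by linarith
    have huv : (inner ℝ (pdx (pdx (pdx f)) p) (pdx (pdx (pdy f)) p) : ℝ) = 0 := by linarith
    have hAB : (inner ℝ (nProj2 f p (pdx (pdx (pdx f)) p))
        (nProj2 f p (pdx (pdx (pdy f)) p)) : ℝ) = 0 := by rw [(key p hp).1]; exact huv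
    have hAA : (inner ℝ (nProj2 f p (pdx (pdx (pdx f)) p))
          (nProj2 f p (pdx (pdx (pdx f)) p)) : ℝ)
        = inner ℝ (nProj2 f p (pdx (pdx (pdy f)) p)) (nProj2 f p (pdx (pdx (pdy f)) p)) := by
      have h2 := (key p hp).2
      linarith
    refine ⟨(‖pdx f p‖ ^ 3)⁻¹ * ‖nProj2 f p (pdx (pdx (pdx f)) p)‖,
      mul_nonneg (inv_nonneg.mpr (by positivity)) (norm_nonneg _), ?_⟩
    intro θ
    rw [hdir p hp θ, norm_smul, Real.norm_eq_abs,
      _root_.abs_of_nonneg (inv_nonneg.mpr (by positivity : (0:ℝ) ≤ ‖pdx f p‖ ^ 3))]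
    congr 1
    have hCS : Real.cos (3 * θ) ^ 2 + Real.sin (3 * θ) ^ 2 = 1 := Real.cos_sq_add_sin_sq _
    have h1 : ‖Real.cos (3 * θ) • nProj2 f p (pdx (pdx (pdx f)) p)
          + Real.sin (3 * θ) • nProj2 f p (pdx (pdx (pdy f)) p)‖ ^ 2
        = ‖nProj2 f p (pdx (pdx (pdx f)) p)‖ ^ 2 := by
      rw [← real_inner_self_eq_norm_sq, ← real_inner_self_eq_norm_sq, inner_comb_self,
        hAB, ← hAA]
      linear_combination (inner ℝ (nProj2 f p (pdx (pdx (pdx f)) p))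
        (nProj2 f p (pdx (pdx (pdx f)) p)) : ℝ) * hCS
    calc ‖Real.cos (3 * θ) • nProj2 f p (pdx (pdx (pdx f)) p)
          + Real.sin (3 * θ) • nProj2 f p (pdx (pdx (pdy f)) p)‖
        = Real.sqrt (‖Real.cos (3 * θ) • nProj2 f p (pdx (pdx (pdx f)) p)
            + Real.sin (3 * θ) • nProj2 f p (pdx (pdx (pdy f)) p)‖ ^ 2) :=
          (Real.sqrt_sq (norm_nonneg _)).symm
      _ = Real.sqrt (‖nProj2 f p (pdx (pdx (pdx f)) p)‖ ^ 2) := by rw [h1]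
      _ = ‖nProj2 f p (pdx (pdx (pdx f)) p)‖ := Real.sqrt_sq (norm_nonneg _)
end
end

section
/- Let U ⊆ ℂ be open and connected, φ : U → ℂ^m holomorphic, β : U → ℂ holomorphic and nowhere zero, and set q := Σₖ φₖ². Define α : U → ℂ^{m+2} by α := (β(1−q), iβ(1+q), 2βφ₁, …, 2βφ_m). Then α is holomorphic, nowhere zero, satisfies ⟪α,α⟫ ≡ 0, and its derivative satisfies ⟪α′,α′⟫ = 4β²·⟪φ′,φ′⟫ on U. -/
noncomputable section

open Complex Submodule Module
open scoped RealInnerProductSpace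

variable {n : ℕ}

theorem hasDerivAt_euclidean' {N : ℕ} {f : ℂ → EucC N} {f' : EucC N} {z : ℂ} :
    HasDerivAt f f' z ↔ ∀ i, HasDerivAt (fun w => f w i) (f' i) z := by
  rw [hasDerivAt_iff_hasFDerivAt,
    ← (PiLp.continuousLinearEquiv 2 ℂ fun _ : Fin N => ℂ).comp_hasFDerivAt_iff]
  exact hasDerivAt_pi

theorem differentiableOn_euclidean' {N : ℕ} {f : ℂ → EucC N} {s : Set ℂ} :
    DifferentiableOn ℂ f s ↔ ∀ i, DifferentiableOn ℂ (fun w => f w i) s :=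
  differentiableOn_piLp 2

/-- One step of the Weierstrass-type representation: α = β(1-q, i(1+q), 2φ)
is holomorphic, nowhere zero, null, and ⟪α′,α′⟫ = 4β²⟪φ′,φ′⟫. -/
theorem weierstrass_step
    {m : ℕ} (U : Set ℂ) (hU : IsOpen U) (hUconn : IsConnected U)
    (φ : ℂ → EucC m) (hφ : DifferentiableOn ℂ φ U)
    (β : ℂ → ℂ) (hβ : DifferentiableOn ℂ β U) (hβ0 : ∀ z ∈ U, β z ≠ 0)
    (α : ℂ → EucC (2 + m))
    (hα : ∀ z : ℂ,
        α z (Fin.castAdd m 0) = β z * (1 - ∑ k, φ z k ^ 2) ∧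
        α z (Fin.castAdd m 1) = Complex.I * β z * (1 + ∑ k, φ z k ^ 2) ∧
        ∀ k : Fin m, α z (Fin.natAdd 2 k) = 2 * β z * φ z k) :
    DifferentiableOn ℂ α U ∧ (∀ z ∈ U, α z ≠ 0) ∧
    (∀ z ∈ U, bil (α z) (α z) = 0) ∧
    ∀ z ∈ U, bil (deriv α z) (deriv α z) = 4 * β z ^ 2 * bil (deriv φ z) (deriv φ z) := by
  
  have h0f : (fun z => α z (Fin.castAdd m 0)) = fun z => β z * (1 - ∑ k, φ z k ^ 2) :=
    funext fun z => (hα z).1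
  have h1f : (fun z => α z (Fin.castAdd m 1))
      = fun z => Complex.I * β z * (1 + ∑ k, φ z k ^ 2) :=
    funext fun z => (hα z).2.1
  have h2f : ∀ k : Fin m, (fun z => α z (Fin.natAdd 2 k)) = fun z => 2 * β z * φ z k :=
    fun k => funext fun z => (hα z).2.2 k
  have hφk : ∀ k : Fin m, DifferentiableOn ℂ (fun z => φ z k) U :=
    differentiableOn_euclidean'.1 hφ
  have hq : DifferentiableOn ℂ (fun z => ∑ k, φ z k ^ 2) U :=
    DifferentiableOn.fun_sum fun k _ => (hφk k).pow 2
  have hαdiff : DifferentiableOn ℂ α U := by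
    rw [differentiableOn_euclidean']
    intro i
    induction i using Fin.addCases with
    | left j =>
      fin_cases j
      · show DifferentiableOn ℂ (fun w => α w (Fin.castAdd m 0)) U
        rw [h0f]; exact hβ.mul ((differentiableOn_const 1).sub hq)
      · show DifferentiableOn ℂ (fun w => α w (Fin.castAdd m 1)) U
        rw [h1f]; exact (hβ.const_mul Complex.I).mul ((differentiableOn_const 1).add hq)
    | right k =>
      rw [h2f k]; exact (hβ.const_mul 2).mul (hφk k)
  have hne : ∀ z ∈ U, α z ≠ 0 := by
    intro z hz h
    have h0 : β z * (1 - ∑ k, φ z k ^ 2) = 0 := by rw [← (hα z).1, h]; rfl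
    have h1 : Complex.I * β z * (1 + ∑ k, φ z k ^ 2) = 0 := by rw [← (hα z).2.1, h]; rfl
    have e0 : 1 - ∑ k, φ z k ^ 2 = 0 := by
      rcases mul_eq_zero.1 h0 with h' | h'
      · exact absurd h' (hβ0 z hz)
      · exact h'
    have e1 : 1 + ∑ k, φ z k ^ 2 = 0 := by
      rcases mul_eq_zero.1 h1 with h' | h'
      · rcases mul_eq_zero.1 h' with h'' | h''
        · exact absurd h'' Complex.I_ne_zero
        · exact absurd h'' (hβ0 z hz)
      · exact h'
    have h2 : (2 : ℂ) = 0 := by linear_combination e0 + e1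
    norm_num at h2
  have hbil0 : ∀ z ∈ U, bil (α z) (α z) = 0 := by
    intro z hz
    obtain ⟨e0, e1, e2⟩ := hα z
    simp only [bil, Fin.sum_univ_add, Fin.sum_univ_two, e0, e1, e2]
    have hs : ∑ k, (2 * β z * φ z k) * (2 * β z * φ z k) = 4 * β z ^ 2 * ∑ k, φ z k ^ 2 := by
      rw [Finset.mul_sum]
      exact Finset.sum_congr rfl fun k _ => by ring
    rw [hs]
    linear_combination (β z ^ 2 * (1 + ∑ k, φ z k ^ 2) ^ 2) * Complex.I_sq
  refine ⟨hαdiff, hne, hbil0, ?_⟩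
  intro z hz
  have hzU : U ∈ nhds z := hU.mem_nhds hz
  have hβz : HasDerivAt β (deriv β z) z := ((hβ z hz).differentiableAt hzU).hasDerivAt
  have hφz : HasDerivAt φ (deriv φ z) z := ((hφ z hz).differentiableAt hzU).hasDerivAt
  have hφkz : ∀ k, HasDerivAt (fun w => φ w k) (deriv φ z k) z := hasDerivAt_euclidean'.1 hφz
  set A := deriv β z with hA
  set B := β z with hB
  have hqz : HasDerivAt (fun w => ∑ k, φ w k ^ 2) (∑ k, 2 * φ z k * deriv φ z k) z := by
    refine HasDerivAt.fun_sum fun k _ => ?_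
    simpa using (hφkz k).fun_pow 2
  have hd0 : HasDerivAt (fun w => β w * (1 - ∑ k, φ w k ^ 2))
      (A * (1 - ∑ k, φ z k ^ 2) + B * (0 - ∑ k, 2 * φ z k * deriv φ z k)) z :=
    hβz.mul ((hasDerivAt_const z 1).sub hqz)
  have hd1 : HasDerivAt (fun w => Complex.I * β w * (1 + ∑ k, φ w k ^ 2))
      (Complex.I * A * (1 + ∑ k, φ z k ^ 2)
        + Complex.I * B * (0 + ∑ k, 2 * φ z k * deriv φ z k)) z :=
    (hβz.const_mul Complex.I).mul ((hasDerivAt_const z 1).add hqz)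
  have hdk : ∀ k, HasDerivAt (fun w => 2 * β w * φ w k)
      (2 * A * φ z k + 2 * B * deriv φ z k) z :=
    fun k => (hβz.const_mul 2).mul (hφkz k)
  have hv : HasDerivAt α (WithLp.toLp 2 (Fin.append
      ![A * (1 - ∑ k, φ z k ^ 2) + B * (0 - ∑ k, 2 * φ z k * deriv φ z k),
        Complex.I * A * (1 + ∑ k, φ z k ^ 2)
          + Complex.I * B * (0 + ∑ k, 2 * φ z k * deriv φ z k)]
      (fun k => 2 * A * φ z k + 2 * B * deriv φ z k) : Fin (2 + m) → ℂ) : EucC (2 + m)) z := by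
    rw [hasDerivAt_euclidean']
    intro i
    induction i using Fin.addCases with
    | left j =>
      fin_cases j
      · show HasDerivAt (fun w => α w (Fin.castAdd m 0)) _ z
        simpa [h0f, Fin.append_left, PiLp.toLp_apply] using hd0
      · show HasDerivAt (fun w => α w (Fin.castAdd m 1)) _ z
        simpa [h1f, Fin.append_left, PiLp.toLp_apply] using hd1
    | right k =>
      simpa [h2f k, Fin.append_right, PiLp.toLp_apply] using hdk k
  rw [hv.deriv]
  simp only [bil, PiLp.toLp_apply, Fin.sum_univ_add, Fin.append_left, Fin.append_right, Fin.sum_univ_two,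
    Matrix.cons_val_zero, Matrix.cons_val_one, Matrix.head_cons]
  have hsum : ∑ k, (2 * A * φ z k + 2 * B * deriv φ z k) * (2 * A * φ z k + 2 * B * deriv φ z k)
      = 4 * A ^ 2 * (∑ k, φ z k ^ 2) + 4 * A * B * (∑ k, 2 * φ z k * deriv φ z k)
        + 4 * B ^ 2 * ∑ k, deriv φ z k * deriv φ z k := by
    have h : ∀ k ∈ Finset.univ, (2 * A * φ z k + 2 * B * deriv φ z k)
          * (2 * A * φ z k + 2 * B * deriv φ z k)
        = 4 * A ^ 2 * (φ z k ^ 2) + 4 * A * B * (2 * φ z k * deriv φ z k)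
          + 4 * B ^ 2 * (deriv φ z k * deriv φ z k) := fun k _ => by ring
    rw [Finset.sum_congr rfl h, Finset.sum_add_distrib, Finset.sum_add_distrib,
      ← Finset.mul_sum, ← Finset.mul_sum, ← Finset.mul_sum]
  rw [hsum]
  linear_combination ((A * (1 + ∑ k, φ z k ^ 2) + B * ∑ k, 2 * φ z k * deriv φ z k) ^ 2)
    * Complex.I_sq
end
end
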